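/- Let (X,G) be a connected locally finite graph and H a finitely separating subpocset consisting of sets H such that both H and its complement have finite boundary and are connected or empty. Then every set A with finite boundary is non-nested with only finitely many members of H. -/
import Mathlib


open SimpleGraph

variable {X : Type*}

/-- The geodesic interval between `x` and `y`. -/
def interval (G : SimpleGraph X) (x y : X) : Set X :=
  {z | G.dist x z + G.dist z y = G.dist x y}

/-- A set is convex if it contains all geodesics between its points. -/
def IsConvexSet (G : SimpleGraph X) (A : Set X) : Prop :=
  ∀ x ∈ A, ∀ y ∈ A, interval G x y ⊆ A

/-- A median graph: connected, and every triple has a unique median. -/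
def IsMedianGraph (G : SimpleGraph X) : Prop :=
  G.Connected ∧ ∀ x y z : X, ∃! m : X,
    m ∈ interval G x y ∧ m ∈ interval G y z ∧ m ∈ interval G z x

/-- The cone at `y` away from `x`. -/
def cone (G : SimpleGraph X) (x y : X) : Set X :=
  {z | y ∈ interval G x z}

/-- A half-space: a convex set with convex complement. -/
def IsHalfspace (G : SimpleGraph X) (H : Set X) : Prop :=
  IsConvexSet G H ∧ IsConvexSet G Hᶜ

/-- Convex hull. -/
def convexHullG (G : SimpleGraph X) (A : Set X) : Set X :=
  ⋂₀ {B : Set X | IsConvexSet G B ∧ A ⊆ B}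

/-- Inward edge boundary of a set. -/
def edgeBoundaryIn (G : SimpleGraph X) (H : Set X) : Set (X × X) :=
  {e | G.Adj e.1 e.2 ∧ e.1 ∉ H ∧ e.2 ∈ H}

/-- Two sets are nested if one of the four corners is empty. -/
def Nested (A B : Set X) : Prop :=
  A ∩ B = ∅ ∨ A ∩ Bᶜ = ∅ ∨ Aᶜ ∩ B = ∅ ∨ Aᶜ ∩ Bᶜ = ∅

open Classical in
noncomputable def medianOf (G : SimpleGraph X) (x y z : X) : X :=
  if h : ∃! m : X, m ∈ interval G x y ∧ m ∈ interval G y z ∧ m ∈ interval G z x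
  then h.choose else x

open Classical in
noncomputable def projOn (G : SimpleGraph X) (A : Set X) (x : X) : X :=
  if h : ∃ p, p ∈ A ∧ ∀ a ∈ A, p ∈ interval G x a then h.choose else x


/-- Edges crossing out of a set. -/
def crossEdges (G : SimpleGraph X) (A : Set X) : Set (X × X) :=
  {e | G.Adj e.1 e.2 ∧ e.1 ∈ A ∧ e.2 ∉ A}

/-- Total vertex boundary of a set. -/
def vBoundary (G : SimpleGraph X) (A : Set X) : Set X :=
  {x | ∃ y, G.Adj x y ∧ ((x ∈ A ∧ y ∉ A) ∨ (x ∉ A ∧ y ∈ A))}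

/-- Two sets are non-nested if all four corners are nonempty. -/
def NonNested (A B : Set X) : Prop :=
  (A ∩ B).Nonempty ∧ (A ∩ Bᶜ).Nonempty ∧ (Aᶜ ∩ B).Nonempty ∧ (Aᶜ ∩ Bᶜ).Nonempty

/-- `H` is a successor of `K`: both are half-spaces, `K ⊊ H`, with no half-space
strictly in between. -/
def Successor (G : SimpleGraph X) (H K : Set X) : Prop :=
  IsHalfspace G H ∧ IsHalfspace G K ∧ K ⊂ H ∧
    ¬ ∃ L : Set X, IsHalfspace G L ∧ K ⊂ L ∧ L ⊂ H

/-- Adjacency of the hyperplanes of half-spaces `H`, `K`. -/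
def HypAdj (G : SimpleGraph X) (H K : Set X) : Prop :=
  H = K ∨ H = Kᶜ ∨ NonNested H K ∨
  Successor G H K ∨ Successor G K H ∨
  Successor G Hᶜ K ∨ Successor G K Hᶜ ∨
  Successor G H Kᶜ ∨ Successor G Kᶜ H ∨
  Successor G Hᶜ Kᶜ ∨ Successor G Kᶜ Hᶜ

/-- The Hamming cube on `{0,1}^n`: strings adjacent iff they differ in exactly one bit. -/
def hammingCube (n : ℕ) : SimpleGraph (Fin n → Bool) :=
  SimpleGraph.fromRel (fun a b => ∃! i : Fin n, a i ≠ b i)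

/-- Oriented edges `e`, `f` are parallel sides of a square (4-cycle). -/
def SquareParallel (G : SimpleGraph X) (e f : X × X) : Prop :=
  G.Adj e.1 e.2 ∧ G.Adj f.1 f.2 ∧ G.Adj e.1 f.1 ∧ G.Adj e.2 f.2 ∧ e.1 ≠ f.2 ∧ e.2 ≠ f.1

lemma cross_in_set {G : SimpleGraph X} {A S : Set X} (hc : (G.induce S).Connected)
    {a b : X} (ha : a ∈ S) (hb : b ∈ S) (haA : a ∈ A) (hbA : b ∉ A) :
    ∃ e ∈ crossEdges G A, e.1 ∈ S ∧ e.2 ∈ S := by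
  obtain ⟨w⟩ := hc.preconnected ⟨a, ha⟩ ⟨b, hb⟩
  obtain ⟨d, _, hd1, hd2⟩ := w.exists_boundary_dart (Subtype.val ⁻¹' A) haA hbA
  exact ⟨(d.fst.val, d.snd.val), ⟨d.adj, hd1, hd2⟩, d.fst.2, d.snd.2⟩

theorem finboundary_nonnested_finite (G : SimpleGraph X)
    (hconn : G.Connected) (hlf : ∀ v : X, (G.neighborSet v).Finite)
    (𝓗 : Set (Set X))
    (hcompl : ∀ A ∈ 𝓗, Aᶜ ∈ 𝓗) (h0 : ∅ ∈ 𝓗) (h1 : Set.univ ∈ 𝓗)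
    (hfin : ∀ A ∈ 𝓗, (crossEdges G A).Finite)
    (hconnH : ∀ A ∈ 𝓗, (A = ∅ ∨ (G.induce A).Connected) ∧
        (Aᶜ = ∅ ∨ (G.induce Aᶜ).Connected))
    (hsep : ∀ x y : X, {A : Set X | A ∈ 𝓗 ∧ x ∈ A ∧ y ∉ A}.Finite)
    (A : Set X) (hA : (crossEdges G A).Finite) :
    {K : Set X | K ∈ 𝓗 ∧ NonNested A K}.Finite := by
  classical
  set F : Set X := (Prod.fst '' crossEdges G A) ∪ (Prod.snd '' crossEdges G A) with hF
  have hFfin : F.Finite := (hA.image _).union (hA.image _)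
  have hsub : {K : Set X | K ∈ 𝓗 ∧ NonNested A K} ⊆
      ⋃ x ∈ F, ⋃ y ∈ F, {K : Set X | K ∈ 𝓗 ∧ x ∈ K ∧ y ∉ K} := by
    rintro K ⟨hK, ⟨⟨p, hpA, hpK⟩, ⟨q, hqA, hqK⟩, ⟨r, hrA, hrK⟩, ⟨s, hsA, hsK⟩⟩⟩
    have hKne : K ≠ ∅ := fun h => by simp [h] at hpK
    have hKcne : Kᶜ ≠ ∅ := fun h => by simp only [h] at hqK; exact hqK
    obtain ⟨hKc, hKcc⟩ := hconnH K hK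
    have hKc' := hKc.resolve_left hKne
    have hKcc' := hKcc.resolve_left hKcne
    obtain ⟨e, heA, he1, he2⟩ := cross_in_set hKc' hpK hrK hpA hrA
    obtain ⟨f, hfA, hf1, hf2⟩ := cross_in_set hKcc' hqK hsK hqA hsA
    refine Set.mem_biUnion (show e.1 ∈ F from Or.inl ⟨e, heA, rfl⟩) ?_
    exact Set.mem_biUnion (show f.1 ∈ F from Or.inl ⟨f, hfA, rfl⟩) ⟨hK, he1, hf1⟩
  exact Set.Finite.subset
    (hFfin.biUnion fun x _ => hFfin.biUnion fun y _ => hsep x y) hsub
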